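/- arXiv:2112.11249 — 4 statements merged into one kernel-verified Lean document; each statement's English description precedes it below -/
import Mathlib

section
/- The half-kink q(x) = (1 - x⁴)/(1 + x⁴) satisfies the Bogomolnyi equation (1/2)q'(x) + (1/x)(1 - q(x)²) = 0 for x ∈ (0,1], together with q(0) = 1 and q(1) = 0, and its energy is E[q] = ∫₀¹ ((1/4)q'² + (1/x²)(1 - q²)²) x dx = 2/3. -/
/-!
On a solution of the Bogomolnyi equation `w' = -2(1 - w²)/x` the two terms of the energy density
are equal, and the density becomes `w'(w² - 1)`, the derivative of `w³/3 - w`. The energy is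
therefore the boundary term `W(w(a)) - W(w(b))` with `W(w) = w - w³/3`, which for the half-kink
is `W(1) - W(0) = 2/3`.
-/

open Set

theorem energyDensity_eq_of_bogomolnyi {x w w' : ℝ} (hx : x ≠ 0)
    (hbog : (1 / 2) * w' + (1 - w ^ 2) / x = 0) :
    ((1 / 4) * w' ^ 2 + (1 - w ^ 2) ^ 2 / x ^ 2) * x = w' * (w ^ 2 - 1) := by
  have hw' : w' = -2 * (1 - w ^ 2) / x := by linear_combination 2 * hbog
  subst hw'
  field_simp
  ring

theorem integral_energy_of_bogomolnyi {w : ℝ → ℝ} {a b : ℝ} (ha : 0 ≤ a) (hab : a ≤ b)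
    (hcont : ContinuousOn w (Icc a b)) (hdiff : ∀ x ∈ Ioo a b, DifferentiableAt ℝ w x)
    (hbog : ∀ x ∈ Ioo a b, (1 / 2) * deriv w x + (1 - w x ^ 2) / x = 0) :
    ∫ x in a..b, ((1 / 4) * deriv w x ^ 2 + (1 - w x ^ 2) ^ 2 / x ^ 2) * x
      = (w a - w a ^ 3 / 3) - (w b - w b ^ 3 / 3) := by
  have hderiv : ∀ x ∈ Ioo a b, HasDerivAt (fun x => w x ^ 3 / 3 - w x)
      (((1 / 4) * deriv w x ^ 2 + (1 - w x ^ 2) ^ 2 / x ^ 2) * x) x := by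
    intro x hx
    rw [energyDensity_eq_of_bogomolnyi (ha.trans_lt hx.1).ne' (hbog x hx)]
    have hw := (hdiff x hx).hasDerivAt
    refine (((hw.pow 3).div_const 3).sub hw).congr_deriv ?_
    norm_num
    ring
  have hnonneg : ∀ x ∈ Ioo a b,
      0 ≤ ((1 / 4) * deriv w x ^ 2 + (1 - w x ^ 2) ^ 2 / x ^ 2) * x := fun x hx => by
    have : 0 ≤ x := ha.trans hx.1.le
    positivity
  have hcont' : ContinuousOn (fun x => w x ^ 3 / 3 - w x) (Icc a b) :=
    ((hcont.pow 3).div_const 3).sub hcont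
  -- a nonnegative derivative is automatically integrable, so no regularity of `deriv w` is needed
  rw [intervalIntegral.integral_eq_sub_of_hasDerivAt_of_le hab hcont' hderiv
    ((intervalIntegrable_iff_integrableOn_Ioc_of_le hab).2
      (intervalIntegral.integrableOn_deriv_of_nonneg hcont' hderiv hnonneg))]
  ring

theorem hasDerivAt_halfKink (x : ℝ) :
    HasDerivAt (fun x : ℝ => (1 - x ^ 4) / (1 + x ^ 4)) (-8 * x ^ 3 / (1 + x ^ 4) ^ 2) x := by
  have hpow : HasDerivAt (fun x : ℝ => x ^ 4) (4 * x ^ 3) x := by simpa using hasDerivAt_pow 4 x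
  refine ((hpow.const_sub 1).div (hpow.const_add 1) (by positivity)).congr_deriv ?_
  field_simp
  ring

/-- The half-kink `q(x) = (1-x⁴)/(1+x⁴)` satisfies the Bogomolnyi equation
`(1/2) q' + (1/x)(1 - q²) = 0` on `(0,1]`, with `q(0) = 1`, `q(1) = 0`, and its
energy equals `2/3`. -/
theorem halfKink_bogomolnyi :
    let q : ℝ → ℝ := fun x => (1 - x ^ 4) / (1 + x ^ 4)
    (∀ x ∈ Set.Ioc (0:ℝ) 1, (1/2) * deriv q x + (1 - q x ^ 2) / x = 0) ∧
    q 0 = 1 ∧ q 1 = 0 ∧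
    (∫ x in (0:ℝ)..1, ((1/4) * deriv q x ^ 2 + (1 - q x ^ 2) ^ 2 / x ^ 2) * x) = 2 / 3 := by
  intro q
  have hbog : ∀ x ∈ Ioc (0:ℝ) 1, (1/2) * deriv q x + (1 - q x ^ 2) / x = 0 := by
    intro x hx
    have hx0 : x ≠ 0 := hx.1.ne'
    rw [(hasDerivAt_halfKink x).deriv]
    simp only [q]
    field_simp
    ring
  have hq0 : q 0 = 1 := by norm_num [q]
  have hq1 : q 1 = 0 := by norm_num [q]
  refine ⟨hbog, hq0, hq1, ?_⟩
  rw [integral_energy_of_bogomolnyi le_rfl zero_le_one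
    (fun x _ => (hasDerivAt_halfKink x).continuousAt.continuousWithinAt)
    (fun x _ => (hasDerivAt_halfKink x).differentiableAt)
    (fun x hx => hbog x (Ioo_subset_Ioc_self hx))]
  norm_num
end

section
/- If a smooth solution w(u,x) of the characteristic Yang-Mills equation admits a convergent expansion w(u,x) = 1 + c₁(u)x + c₂(u)x² + O(x³) near x = 0 with u-differentiable coefficients, then c₂'(u) = 0, i.e. the Newman-Penrose coefficient c₂ is constant in u. -/
open Asymptotics

/-- If a smooth solution of the characteristic Yang-Mills equation admits an expansion
`w(u,x) = 1 + c₁(u) x + c₂(u) x² + O(x³)` near `x = 0` with `u`-differentiable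
coefficients (and correspondingly controlled remainder), then the Newman-Penrose
coefficient `c₂` is constant in `u`. -/
theorem newmanPenrose_constant (w : ℝ → ℝ → ℝ) (c₁ c₂ : ℝ → ℝ) (R : ℝ → ℝ → ℝ)
    (hw : ContDiff ℝ (⊤ : ℕ∞) (Function.uncurry w))
    (hc₁ : Differentiable ℝ c₁) (hc₂ : Differentiable ℝ c₂)
    (heq : ∀ u : ℝ, ∀ x ∈ Set.Ioc (0:ℝ) 1,
      -4 * x * deriv (fun x' => deriv (fun u' => w u' x') u) x
          + 4 * deriv (fun u' => w u' x) u
        = x ^ 4 * deriv (fun x' => deriv (fun x'' => w u x'') x') x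
          + x ^ 3 * deriv (fun x' => w u x') x
          + 8 * x ^ 2 * w u x * (1 - w u x ^ 2))
    (hexp : ∀ u x : ℝ, w u x = 1 + c₁ u * x + c₂ u * x ^ 2 + R u x)
    (hR : ∀ u : ℝ, (fun x => R u x) =O[nhdsWithin 0 (Set.Ioi 0)] fun x => x ^ 3)
    (hRu : ∀ u : ℝ,
      (fun x => deriv (fun u' => R u' x) u) =O[nhdsWithin 0 (Set.Ioi 0)] fun x => x ^ 3)
    (hRxu : ∀ u : ℝ,
      (fun x => deriv (fun x' => deriv (fun u' => R u' x') u) x)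
        =O[nhdsWithin 0 (Set.Ioi 0)] fun x => x ^ 2) :
    ∀ u : ℝ, deriv c₂ u = 0 := by
  intro u
  set L : Filter ℝ := nhdsWithin 0 (Set.Ioi 0) with hL
  set W : ℝ × ℝ → ℝ := Function.uncurry w with hWdef
  have hWd : Differentiable ℝ W := hw.differentiable (by simp)
  have hfd : ContDiff ℝ (⊤ : ℕ∞) (fderiv ℝ W) := hw.fderiv_right (by simp)
  -- partial derivatives
  set Du : ℝ → ℝ → ℝ := fun a x => fderiv ℝ W (a, x) (1, 0) with hDudef
  set Dx : ℝ → ℝ → ℝ := fun a x => fderiv ℝ W (a, x) (0, 1) with hDxdef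
  have hasDu : ∀ a x : ℝ, HasDerivAt (fun u' => w u' x) (Du a x) a := by
    intro a x
    have h1 : HasFDerivAt W (fderiv ℝ W (a, x)) (a, x) := (hWd (a, x)).hasFDerivAt
    have h2 : HasDerivAt (fun u' : ℝ => (u', x)) ((1 : ℝ), (0 : ℝ)) a :=
      (hasDerivAt_id a).prodMk (hasDerivAt_const a x)
    exact h1.comp_hasDerivAt a h2
  have hasDx : ∀ a x : ℝ, HasDerivAt (fun x' => w a x') (Dx a x) x := by
    intro a x
    have h1 : HasFDerivAt W (fderiv ℝ W (a, x)) (a, x) := (hWd (a, x)).hasFDerivAt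
    have h2 : HasDerivAt (fun x' : ℝ => (a, x')) ((0 : ℝ), (1 : ℝ)) x :=
      (hasDerivAt_const x a).prodMk (hasDerivAt_id x)
    exact h1.comp_hasDerivAt x h2
  -- smoothness of partial derivatives in x
  have hDuC : ∀ a : ℝ, ContDiff ℝ (⊤ : ℕ∞) (fun x => Du a x) := by
    intro a
    exact (ContinuousLinearMap.apply ℝ ℝ ((1:ℝ), (0:ℝ))).contDiff.comp
      (hfd.comp (contDiff_const.prodMk contDiff_id))
  have hDxC : ∀ a : ℝ, ContDiff ℝ (⊤ : ℕ∞) (fun x => Dx a x) := by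
    intro a
    exact (ContinuousLinearMap.apply ℝ ℝ ((0:ℝ), (1:ℝ))).contDiff.comp
      (hfd.comp (contDiff_const.prodMk contDiff_id))
  -- rewrite derivatives
  have hDuEq : ∀ a x : ℝ, deriv (fun u' => w u' x) a = Du a x := fun a x => (hasDu a x).deriv
  have hDxEq : ∀ a x : ℝ, deriv (fun x' => w a x') x = Dx a x := fun a x => (hasDx a x).deriv
  have hwxx : ∀ x : ℝ, deriv (fun x' => deriv (fun x'' => w u x'') x') x
      = deriv (fun x' => Dx u x') x := by
    intro x
    congr 1
    funext x'
    exact hDxEq u x'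
  have hwxu : ∀ x : ℝ, deriv (fun x' => deriv (fun u' => w u' x') u) x
      = deriv (fun x' => Du u x') x := by
    intro x
    congr 1
    funext x'
    exact hDuEq u x'
  -- the u-derivative of R
  have hRuEq : ∀ x : ℝ, deriv (fun u' => R u' x) u
      = Du u x - deriv c₁ u * x - deriv c₂ u * x ^ 2 := by
    intro x
    have hfun : (fun u' => R u' x) = fun u' => w u' x - 1 - c₁ u' * x - c₂ u' * x ^ 2 := by
      funext u'
      have := hexp u' x
      linarith
    rw [hfun]
    have h : HasDerivAt (fun u' => w u' x - 1 - c₁ u' * x - c₂ u' * x ^ 2)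
        (Du u x - deriv c₁ u * x - deriv c₂ u * x ^ 2) u := by
      exact (((hasDu u x).sub_const 1).sub ((hc₁ u).hasDerivAt.mul_const x)).sub
        ((hc₂ u).hasDerivAt.mul_const (x ^ 2))
    exact h.deriv
  -- the x-derivative of the u-derivative of R
  have hRxuEq : ∀ x : ℝ, deriv (fun x' => deriv (fun u' => R u' x') u) x
      = deriv (fun x' => Du u x') x - deriv c₁ u - 2 * deriv c₂ u * x := by
    intro x
    have hfun : (fun x' => deriv (fun u' => R u' x') u)
        = fun x' => Du u x' - deriv c₁ u * x' - deriv c₂ u * x' ^ 2 := by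
      funext x'
      exact hRuEq x'
    rw [hfun]
    have hdu : HasDerivAt (fun x' => Du u x') (deriv (fun x' => Du u x') x) x :=
      ((hDuC u).differentiable (by simp) x).hasDerivAt
    have h : HasDerivAt (fun x' => Du u x' - deriv c₁ u * x' - deriv c₂ u * x' ^ 2)
        (deriv (fun x' => Du u x') x - deriv c₁ u - 2 * deriv c₂ u * x) x := by
      have h1 : HasDerivAt (fun x' : ℝ => deriv c₁ u * x') (deriv c₁ u) x := by
        simpa using (hasDerivAt_id x).const_mul (deriv c₁ u)
      have h2 : HasDerivAt (fun x' : ℝ => deriv c₂ u * x' ^ 2) (deriv c₂ u * (2 * x)) x := by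
        simpa using ((hasDerivAt_pow 2 x)).const_mul (deriv c₂ u)
      have := (hdu.sub h1).sub h2
      refine this.congr_deriv ?_
      ring
    exact h.deriv
  -- limits / continuity based big-O facts
  have hxlim : Filter.Tendsto (fun x : ℝ => x) L (nhds 0) :=
    Filter.tendsto_id.mono_left nhdsWithin_le_nhds
  have hx1 : (fun x : ℝ => x) =O[L] (fun _ => (1 : ℝ)) := hxlim.isBigO_one ℝ
  have hcontO : ∀ f : ℝ → ℝ, Continuous f → f =O[L] (fun _ => (1 : ℝ)) := by
    intro f hf
    exact ((hf.tendsto 0).mono_left nhdsWithin_le_nhds).isBigO_one ℝ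
  have hwcont : Continuous (fun x : ℝ => w u x) := by
    have : Continuous W := hw.continuous
    exact this.comp (continuous_const.prodMk continuous_id)
  -- big-O of each term
  have hO1 : (fun x : ℝ => x ^ 4 * deriv (fun x' => Dx u x') x) =O[L] (fun x => x ^ 3) := by
    have hc : Continuous (deriv fun x' => Dx u x') := (hDxC u).continuous_deriv (by simp)
    have := ((isBigO_refl (fun x : ℝ => x ^ 3) L).mul hx1).mul (hcontO _ hc)
    exact this.congr (fun x => by ring) (fun x => by ring)
  have hO2 : (fun x : ℝ => x ^ 3 * Dx u x) =O[L] (fun x => x ^ 3) := by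
    have := (isBigO_refl (fun x : ℝ => x ^ 3) L).mul (hcontO _ ((hDxC u).continuous))
    exact this.congr (fun x => by ring) (fun x => by ring)
  have hwm1 : (fun x : ℝ => w u x - 1) =O[L] (fun x => x) := by
    have h1 : (fun x : ℝ => c₁ u * x) =O[L] (fun x => x) :=
      (isBigO_refl (fun x : ℝ => x) L).const_mul_left (c₁ u)
    have h2 : (fun x : ℝ => c₂ u * x ^ 2) =O[L] (fun x => x) := by
      have := (hx1.mul (isBigO_refl (fun x : ℝ => x) L)).const_mul_left (c₂ u)
      exact this.congr (fun x => by ring) (fun x => by ring)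
    have h3 : (fun x : ℝ => R u x) =O[L] (fun x => x) := by
      have hx2O1 : (fun x : ℝ => x ^ 2) =O[L] (fun _ => (1 : ℝ)) := by
        have := hx1.mul hx1
        exact this.congr (fun x => by ring) (fun x => by ring)
      have := (hR u).trans ((hx2O1.mul (isBigO_refl (fun x : ℝ => x) L)).congr
        (fun x => by ring) (fun x => by ring))
      exact this
    have := (h1.add h2).add h3
    exact this.congr (fun x => by rw [hexp u x]; ring) (fun x => rfl)
  have hO3 : (fun x : ℝ => 8 * x ^ 2 * w u x * (1 - w u x ^ 2)) =O[L] (fun x => x ^ 3) := by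
    have hg : Continuous (fun x : ℝ => 8 * w u x * (1 + w u x)) :=
      ((continuous_const.mul hwcont).mul (continuous_const.add hwcont))
    have h := (((hcontO _ hg).mul ((isBigO_refl (fun x : ℝ => x) L).mul
      (isBigO_refl (fun x : ℝ => x) L))).mul hwm1).neg_left
    exact h.congr (fun x => by ring) (fun x => by ring)
  have hOE : (fun x : ℝ => 4 * x * (deriv (fun x' => Du u x') x - deriv c₁ u
      - 2 * deriv c₂ u * x)) =O[L] (fun x => x ^ 3) := by
    have hE : (fun x : ℝ => deriv (fun x' => Du u x') x - deriv c₁ u - 2 * deriv c₂ u * x)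
        =O[L] (fun x => x ^ 2) := by
      have := hRxu u
      exact this.congr (fun x => hRxuEq x) (fun x => rfl)
    have := ((isBigO_refl (fun x : ℝ => x) L).mul hE).const_mul_left 4
    exact this.congr (fun x => by ring) (fun x => by ring)
  have hORu : (fun x : ℝ => 4 * (Du u x - deriv c₁ u * x - deriv c₂ u * x ^ 2))
      =O[L] (fun x => x ^ 3) := by
    have := (hRu u).const_mul_left 4
    exact this.congr (fun x => by rw [hRuEq x]) (fun x => rfl)
  -- eventual identity
  have hmem : ∀ᶠ x in L, x ∈ Set.Ioc (0:ℝ) 1 :=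
    Ioc_mem_nhdsGT_of_mem (by constructor <;> norm_num)
  have hevent : ∀ᶠ x in L, -4 * deriv c₂ u * x ^ 2 =
      (x ^ 4 * deriv (fun x' => Dx u x') x + x ^ 3 * Dx u x
        + 8 * x ^ 2 * w u x * (1 - w u x ^ 2))
      + 4 * x * (deriv (fun x' => Du u x') x - deriv c₁ u - 2 * deriv c₂ u * x)
      - 4 * (Du u x - deriv c₁ u * x - deriv c₂ u * x ^ 2) := by
    filter_upwards [hmem] with x hx
    have he := heq u x hx
    rw [hwxu x, hwxx x, hDuEq u x, hDxEq u x] at he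
    linarith [he]
  have hfinal : (fun x : ℝ => -4 * deriv c₂ u * x ^ 2) =O[L] (fun x => x ^ 3) := by
    have hsum := ((hO1.add hO2).add hO3).add hOE |>.sub hORu
    have heventEq : (fun x : ℝ =>
        (x ^ 4 * deriv (fun x' => Dx u x') x + x ^ 3 * Dx u x
          + 8 * x ^ 2 * w u x * (1 - w u x ^ 2))
        + 4 * x * (deriv (fun x' => Du u x') x - deriv c₁ u - 2 * deriv c₂ u * x)
        - 4 * (Du u x - deriv c₁ u * x - deriv c₂ u * x ^ 2))
        =ᶠ[L] (fun x : ℝ => -4 * deriv c₂ u * x ^ 2) := by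
      filter_upwards [hevent] with x hx
      exact hx.symm
    exact IsBigO.congr' hsum heventEq Filter.EventuallyEq.rfl
  -- conclude
  obtain ⟨C, hC⟩ := hfinal.bound
  have hpos : ∀ᶠ x in L, x ∈ Set.Ioi (0:ℝ) := self_mem_nhdsWithin
  have hineq : ∀ᶠ x in L, 4 * |deriv c₂ u| ≤ C * x := by
    filter_upwards [hC, hpos] with x hx hx0
    have hx0' : (0:ℝ) < x := hx0
    have h1 : ‖-4 * deriv c₂ u * x ^ 2‖ = 4 * |deriv c₂ u| * x ^ 2 := by
      rw [Real.norm_eq_abs, abs_mul, abs_mul]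
      rw [abs_of_pos (by positivity : (0:ℝ) < x ^ 2)]
      norm_num
    have h2 : ‖x ^ 3‖ = x * x ^ 2 := by
      rw [Real.norm_eq_abs, abs_of_pos (by positivity : (0:ℝ) < x ^ 3)]
      ring
    rw [h1, h2] at hx
    have hx2 : (0:ℝ) < x ^ 2 := by positivity
    nlinarith
  have hClim : Filter.Tendsto (fun x : ℝ => C * x) L (nhds 0) := by
    have := hxlim.const_mul C
    simpa using this
  have : 4 * |deriv c₂ u| ≤ 0 := ge_of_tendsto hClim hineq
  have habs : |deriv c₂ u| = 0 := by
    have := abs_nonneg (deriv c₂ u)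
    linarith
  exact abs_eq_zero.mp habs
end

section
/- The function f₀(u,x) = u^(-5/2)(u x² + 2)^(-5/2) is an exact solution of the linear equation f_ux + (1/4)∂_x(x³ f_x) - (15/4) x f = 0 for u > 0 and x > 0. -/
/-!
With `s = u x²` and `X = s + 2`, a direct computation gives, for every exponent `p`,
`f_ux + (1/4) (x³ f_x)_x = 2 p uᵖ x Xᵖ⁻² ((p + 1) / 2) X² = p (p + 1) x f` for `f = uᵖ Xᵖ`:
the constant `2` in `X` is exactly what makes the bracket a multiple of `X²`.
Since `p (p + 1) = 15/4` at `p = -5/2`, the potential term `(15/4) x f` cancels.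
-/

open Real

theorem hasDerivAt_mul_sq_add_rpow {a c q x : ℝ} (h : 0 < a * x ^ 2 + c) :
    HasDerivAt (fun y => (a * y ^ 2 + c) ^ q) (q * (a * x ^ 2 + c) ^ (q - 1) * (2 * a * x)) x := by
  have hpoly : HasDerivAt (fun y => a * y ^ 2 + c) (2 * a * x) x :=
    (((hasDerivAt_pow 2 x).const_mul a).add_const c).congr_deriv (by norm_num; ring)
  exact (hpoly.rpow_const (Or.inl h.ne')).congr_deriv (by ring)

noncomputable def vacuumMode (p u x : ℝ) : ℝ := u ^ p * (u * x ^ 2 + 2) ^ p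

namespace vacuumMode

variable {p u : ℝ}

theorem deriv_fst (hu : 0 < u) (x : ℝ) :
    deriv (fun v => vacuumMode p v x) u
      = p * u ^ (p - 1) * (u * x ^ 2 + 2) ^ (p - 1) * (2 * u * x ^ 2 + 2) := by
  have hX : 0 < u * x ^ 2 + 2 := by positivity
  have hlin : HasDerivAt (fun v => v * x ^ 2 + 2) (x ^ 2) u := by
    simpa using ((hasDerivAt_id u).mul_const (x ^ 2)).add_const (2 : ℝ)
  have h : HasDerivAt (fun v => vacuumMode p v x) _ u :=
    (hasDerivAt_rpow_const (Or.inl hu.ne')).mul (hlin.rpow_const (Or.inl hX.ne'))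
  rw [h.deriv]
  simp only [rpow_sub_one hu.ne', rpow_sub_one hX.ne']
  field_simp
  ring

theorem deriv_snd (hu : 0 < u) (x : ℝ) :
    deriv (vacuumMode p u) x = u ^ p * (p * (u * x ^ 2 + 2) ^ (p - 1) * (2 * u * x)) :=
  ((hasDerivAt_mul_sq_add_rpow (by positivity)).const_mul _).deriv

theorem deriv_deriv_fst_add_flux (hu : 0 < u) (x : ℝ) :
    deriv (fun y => deriv (fun v => vacuumMode p v y) u) x
        + (1/4) * deriv (fun y => y ^ 3 * deriv (vacuumMode p u) y) x
      = p * (p + 1) * x * vacuumMode p u x := by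
  have hX : 0 < u * x ^ 2 + 2 := by positivity
  simp only [deriv_fst hu, deriv_snd hu]
  have hmixed : HasDerivAt
      (fun y => p * u ^ (p - 1) * (u * y ^ 2 + 2) ^ (p - 1) * (2 * u * y ^ 2 + 2)) _ x :=
    ((hasDerivAt_mul_sq_add_rpow hX).const_mul _).mul
      ((hasDerivAt_pow 2 x).const_mul _ |>.add_const _)
  have hflux : HasDerivAt
      (fun y => y ^ 3 * (u ^ p * (p * (u * y ^ 2 + 2) ^ (p - 1) * (2 * u * y)))) _ x :=
    (hasDerivAt_pow 3 x).mul
      ((((hasDerivAt_mul_sq_add_rpow hX).const_mul p).mul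
        ((hasDerivAt_id' x).const_mul _)).const_mul _)
  rw [hmixed.deriv, hflux.deriv, vacuumMode]
  simp only [rpow_sub_one hu.ne', rpow_sub_one hX.ne']
  field_simp
  ring

end vacuumMode

/-- The function `f₀(u,x) = u^(-5/2) (u x² + 2)^(-5/2)` is an exact solution of the
linearized equation `f_ux + (1/4) ∂_x(x³ f_x) - (15/4) x f = 0` for `u > 0`, `x > 0`. -/
theorem explicit_linear_solution :
    let f : ℝ → ℝ → ℝ := fun u x => u ^ (-(5:ℝ)/2) * (u * x ^ 2 + 2) ^ (-(5:ℝ)/2)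
    ∀ u x : ℝ, 0 < u → 0 < x →
      deriv (fun x' => deriv (fun u' => f u' x') u) x
        + (1/4) * deriv (fun x' => x' ^ 3 * deriv (fun x'' => f u x'') x') x
        - (15/4) * x * f u x = 0 := by
  intro f u x hu _
  rw [show f = vacuumMode (-(5:ℝ)/2) from rfl, vacuumMode.deriv_deriv_fst_add_flux hu]
  ring
end

section
/- If f(u,x) solves f_ux + (1/4)∂_x(x³ f_x) - (15/4) x f = 0 and one defines F(t,r) = x⁵ f(u,x) with u = t - r, x = r^(-1/2), then F satisfies the free radial wave equation in 6+1 dimensions: F_tt - F_rr - (5/r) F_r = 0. -/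
/-- If `f(u,x)` solves `f_ux + (1/4) ∂_x(x³ f_x) - (15/4) x f = 0` and
`F(t,r) = x⁵ f(u,x)` with `u = t - r`, `x = r^(-1/2)`, then `F` satisfies the free
radial wave equation in `6+1` dimensions: `F_tt - F_rr - (5/r) F_r = 0`. -/
theorem linear_eq_as_wave_equation (f : ℝ → ℝ → ℝ)
    (hf : ContDiff ℝ (⊤ : ℕ∞) (Function.uncurry f))
    (heq : ∀ u x : ℝ, 0 < x → x ≤ 1 →
      deriv (fun x' => deriv (fun u' => f u' x') u) x
        + (1/4) * deriv (fun x' => x' ^ 3 * deriv (fun x'' => f u x'') x') x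
        - (15/4) * x * f u x = 0) :
    let F : ℝ → ℝ → ℝ := fun t r => (r ^ (-(1:ℝ)/2)) ^ 5 * f (t - r) (r ^ (-(1:ℝ)/2))
    ∀ t r : ℝ, 1 ≤ r →
      deriv (fun t' => deriv (fun t'' => F t'' r) t') t
        - deriv (fun r' => deriv (fun r'' => F t r'') r') r
        - (5 / r) * deriv (fun r' => F t r') r = 0 := by
  intro F t r hr
  have hr0 : (0:ℝ) < r := lt_of_lt_of_le one_pos hr
  set φ : ℝ × ℝ → ℝ := Function.uncurry f with hφdef
  have hd1 : Differentiable ℝ φ := hf.differentiable (by simp)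
  have hc1 : ContDiff ℝ (⊤ : ℕ∞) (fderiv ℝ φ) := hf.fderiv_right (by simp)
  have hd2 : Differentiable ℝ (fderiv ℝ φ) := hc1.differentiable (by simp)
  -- chain rule along curves
  have key : ∀ (γ : ℝ → ℝ × ℝ) (v : ℝ × ℝ) (s : ℝ), HasDerivAt γ v s →
      HasDerivAt (fun y => φ (γ y)) (fderiv ℝ φ (γ s) v) s := fun γ v s hγ =>
    (hd1 (γ s)).hasFDerivAt.comp_hasDerivAt s hγ
  have key2 : ∀ (γ : ℝ → ℝ × ℝ) (v w : ℝ × ℝ) (s : ℝ), HasDerivAt γ v s →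
      HasDerivAt (fun y => fderiv ℝ φ (γ y) w) (fderiv ℝ (fderiv ℝ φ) (γ s) v w) s := by
    intro γ v w s hγ
    have h1 : HasDerivAt (fun y => fderiv ℝ φ (γ y)) (fderiv ℝ (fderiv ℝ φ) (γ s) v) s :=
      (hd2 (γ s)).hasFDerivAt.comp_hasDerivAt s hγ
    exact (ContinuousLinearMap.apply ℝ ℝ w).hasFDerivAt.comp_hasDerivAt s h1
  -- linearity in the direction
  have hlin : ∀ (L : ℝ × ℝ →L[ℝ] ℝ) (a b : ℝ), L (a, b) = a * L (1,0) + b * L (0,1) := by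
    intro L a b
    have h : (a, b) = a • ((1:ℝ),(0:ℝ)) + b • ((0:ℝ),(1:ℝ)) := by simp
    rw [h, map_add, map_smul, map_smul]; simp [smul_eq_mul]
  have hlin2 : ∀ (L : ℝ × ℝ →L[ℝ] (ℝ × ℝ →L[ℝ] ℝ)) (a b : ℝ) (w : ℝ × ℝ),
      L (a, b) w = a * L (1,0) w + b * L (0,1) w := by
    intro L a b w
    have h : (a, b) = a • ((1:ℝ),(0:ℝ)) + b • ((0:ℝ),(1:ℝ)) := by simp
    rw [h, map_add, map_smul, map_smul]
    simp [smul_eq_mul]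
  set X : ℝ := r ^ (-(1:ℝ)/2) with hX
  have hX0 : 0 < X := Real.rpow_pos_of_pos hr0 _
  have hX1 : X ≤ 1 := Real.rpow_le_one_of_one_le_of_nonpos hr (by norm_num)
  set u : ℝ := t - r with hu
  -- cube identity for the rpow derivative
  have hcube : ∀ r' : ℝ, 0 < r' → r' ^ (-(1:ℝ)/2 - 1) = (r' ^ (-(1:ℝ)/2))^3 := by
    intro r' h
    rw [show (-(1:ℝ)/2 - 1) = (-(1:ℝ)/2) * ((3:ℕ):ℝ) by norm_num, Real.rpow_mul h.le,
      Real.rpow_natCast]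
  have hxr : ∀ r' : ℝ, 0 < r' → HasDerivAt (fun r'' : ℝ => r'' ^ (-(1:ℝ)/2))
      ((-(1:ℝ)/2) * (r' ^ (-(1:ℝ)/2))^3) r' := by
    intro r' h
    have := Real.hasDerivAt_rpow_const (x := r') (p := -(1:ℝ)/2) (Or.inl h.ne')
    rwa [hcube r' h] at this
  -- t-derivatives
  have hcurveT : ∀ t' : ℝ, HasDerivAt (fun t'' : ℝ => (t'' - r, X)) ((1:ℝ), (0:ℝ)) t' :=
    fun t' => ((hasDerivAt_id t').sub_const r).prodMk (hasDerivAt_const t' X)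
  have hFt : ∀ t' : ℝ, HasDerivAt (fun t'' => F t'' r)
      (X^5 * fderiv ℝ φ (t' - r, X) (1, 0)) t' := fun t' =>
    ((key _ _ t' (hcurveT t')).const_mul (X^5))
  have hFtt : deriv (fun t' => deriv (fun t'' => F t'' r) t') t
      = X^5 * (fderiv ℝ (fderiv ℝ φ) (u, X) (1,0) (1,0)) := by
    have h : (fun t' => deriv (fun t'' => F t'' r) t')
        = fun t' => X^5 * fderiv ℝ φ (t' - r, X) (1, 0) := funext fun t' => (hFt t').deriv
    rw [h]
    exact ((key2 _ (1,0) (1,0) t (hcurveT t)).const_mul (X^5)).deriv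
  -- r-derivative curve
  have hcurveR : ∀ r' : ℝ, 0 < r' → HasDerivAt (fun r'' : ℝ => (t - r'', r'' ^ (-(1:ℝ)/2)))
      ((-1:ℝ), (-(1:ℝ)/2) * (r' ^ (-(1:ℝ)/2))^3) r' := fun r' h =>
    ((hasDerivAt_id r').const_sub t).prodMk (hxr r' h)
  -- first r-derivative of F
  have hFr : ∀ r' : ℝ, 0 < r' → HasDerivAt (fun r'' => F t r'')
      ((5:ℕ) * (r' ^ (-(1:ℝ)/2))^4 * ((-(1:ℝ)/2) * (r' ^ (-(1:ℝ)/2))^3)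
          * φ (t - r', r' ^ (-(1:ℝ)/2))
        + (r' ^ (-(1:ℝ)/2))^5
          * fderiv ℝ φ (t - r', r' ^ (-(1:ℝ)/2)) (-1, (-(1:ℝ)/2) * (r' ^ (-(1:ℝ)/2))^3)) r' :=
    fun r' h => ((hxr r' h).pow 5).mul (key _ _ r' (hcurveR r' h))
  -- the nice form of the first r-derivative
  set G : ℝ → ℝ := fun r' =>
      (-(5:ℝ)/2) * (r' ^ (-(1:ℝ)/2))^7 * φ (t - r', r' ^ (-(1:ℝ)/2))
      - (r' ^ (-(1:ℝ)/2))^5 * fderiv ℝ φ (t - r', r' ^ (-(1:ℝ)/2)) (1,0)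
      - (1/2) * (r' ^ (-(1:ℝ)/2))^8 * fderiv ℝ φ (t - r', r' ^ (-(1:ℝ)/2)) (0,1) with hG
  have hGeq : ∀ r' : ℝ, 0 < r' → deriv (fun r'' => F t r'') r' = G r' := by
    intro r' h
    rw [(hFr r' h).deriv, hG]
    rw [hlin]
    push_cast
    ring
  -- second r-derivative: differentiate G at r
  have hGd : HasDerivAt G
      ( ((-(5:ℝ)/2) * ((7:ℕ) * X^6 * ((-(1:ℝ)/2) * X^3)) * φ (u, X)
          + (-(5:ℝ)/2) * X^7 * fderiv ℝ φ (u, X) (-1, (-(1:ℝ)/2) * X^3))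
        - (((5:ℕ) * X^4 * ((-(1:ℝ)/2) * X^3)) * fderiv ℝ φ (u, X) (1,0)
          + X^5 * fderiv ℝ (fderiv ℝ φ) (u, X) (-1, (-(1:ℝ)/2) * X^3) (1,0))
        - ((1/2) * ((8:ℕ) * X^7 * ((-(1:ℝ)/2) * X^3)) * fderiv ℝ φ (u, X) (0,1)
          + (1/2) * X^8 * fderiv ℝ (fderiv ℝ φ) (u, X) (-1, (-(1:ℝ)/2) * X^3) (0,1)) ) r := by
    have h1 : HasDerivAt (fun r' : ℝ => (-(5:ℝ)/2) * (r' ^ (-(1:ℝ)/2))^7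
        * φ (t - r', r' ^ (-(1:ℝ)/2)))
        ((-(5:ℝ)/2) * ((7:ℕ) * X^6 * ((-(1:ℝ)/2) * X^3)) * φ (u, X)
          + (-(5:ℝ)/2) * X^7 * fderiv ℝ φ (u, X) (-1, (-(1:ℝ)/2) * X^3)) r := by
      have := (((hxr r hr0).fun_pow 7).const_mul (-(5:ℝ)/2)).fun_mul (key _ _ r (hcurveR r hr0))
      convert this using 1
    have h2 : HasDerivAt (fun r' : ℝ => (r' ^ (-(1:ℝ)/2))^5
        * fderiv ℝ φ (t - r', r' ^ (-(1:ℝ)/2)) (1,0))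
        (((5:ℕ) * X^4 * ((-(1:ℝ)/2) * X^3)) * fderiv ℝ φ (u, X) (1,0)
          + X^5 * fderiv ℝ (fderiv ℝ φ) (u, X) (-1, (-(1:ℝ)/2) * X^3) (1,0)) r :=
      ((hxr r hr0).pow 5).mul (key2 _ _ (1,0) r (hcurveR r hr0))
    have h3 : HasDerivAt (fun r' : ℝ => (1/2) * (r' ^ (-(1:ℝ)/2))^8
        * fderiv ℝ φ (t - r', r' ^ (-(1:ℝ)/2)) (0,1))
        ((1/2) * ((8:ℕ) * X^7 * ((-(1:ℝ)/2) * X^3)) * fderiv ℝ φ (u, X) (0,1)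
          + (1/2) * X^8 * fderiv ℝ (fderiv ℝ φ) (u, X) (-1, (-(1:ℝ)/2) * X^3) (0,1)) r := by
      have := (((hxr r hr0).fun_pow 8).const_mul ((1:ℝ)/2)).fun_mul (key2 _ _ (0,1) r (hcurveR r hr0))
      convert this using 1
    exact (h1.sub h2).sub h3
  have hFrr : deriv (fun r' => deriv (fun r'' => F t r'') r') r = deriv G r := by
    apply Filter.EventuallyEq.deriv_eq
    exact Filter.eventuallyEq_of_mem (Ioi_mem_nhds hr0) (fun r' h => hGeq r' h)
  -- the PDE at (u, X)
  have hpde := heq u X hX0 hX1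
  have hP1x : ∀ x' : ℝ, deriv (fun u' => f u' x') u = fderiv ℝ φ (u, x') (1,0) := by
    intro x'
    exact (key (fun u' => (u', x')) (1,0) u
      ((hasDerivAt_id u).prodMk (hasDerivAt_const u x'))).deriv
  have hterm1 : deriv (fun x' => deriv (fun u' => f u' x') u) X
      = fderiv ℝ (fderiv ℝ φ) (u, X) (0,1) (1,0) := by
    have h : (fun x' => deriv (fun u' => f u' x') u)
        = fun x' => fderiv ℝ φ (u, x') (1,0) := funext hP1x
    rw [h]
    exact (key2 (fun x' => (u, x')) (0,1) (1,0) X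
      ((hasDerivAt_const X u).prodMk (hasDerivAt_id X))).deriv
  have hP2x : ∀ x' : ℝ, deriv (fun x'' => f u x'') x' = fderiv ℝ φ (u, x') (0,1) := by
    intro x'
    exact (key (fun x'' => (u, x'')) (0,1) x'
      ((hasDerivAt_const x' u).prodMk (hasDerivAt_id x'))).deriv
  have hterm2 : deriv (fun x' => x' ^ 3 * deriv (fun x'' => f u x'') x') X
      = (3:ℕ) * X^2 * fderiv ℝ φ (u, X) (0,1)
        + X^3 * fderiv ℝ (fderiv ℝ φ) (u, X) (0,1) (0,1) := by
    have h : (fun x' => x' ^ 3 * deriv (fun x'' => f u x'') x')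
        = fun x' => x' ^ 3 * fderiv ℝ φ (u, x') (0,1) := funext fun x' => by rw [hP2x x']
    rw [h]
    have := (hasDerivAt_pow 3 X).fun_mul (key2 (fun x' => (u, x')) (0,1) (0,1) X
      ((hasDerivAt_const X u).prodMk (hasDerivAt_id X)))
    convert this.deriv using 1
  rw [hterm1, hterm2] at hpde
  -- symmetry of second derivatives
  have hsym : fderiv ℝ (fderiv ℝ φ) (u, X) (1,0) (0,1)
      = fderiv ℝ (fderiv ℝ φ) (u, X) (0,1) (1,0) :=
    second_derivative_symmetric (fun y => (hd1 y).hasFDerivAt) ((hd2 (u, X)).hasFDerivAt) _ _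
  -- assemble
  have h5r : 5 / r = 5 * X^2 := by
    rw [hX, show ((-(1:ℝ)/2) : ℝ) = (-(1:ℝ)/2) from rfl]
    rw [← Real.rpow_natCast (r ^ (-(1:ℝ)/2)) 2, ← Real.rpow_mul hr0.le]
    norm_num
    rw [Real.rpow_neg_one]
    field_simp
  rw [hFtt, hFrr, hGd.deriv, hGeq r hr0, h5r, hG]
  rw [hlin (fderiv ℝ φ (u, X)) (-1) ((-(1:ℝ)/2) * X^3),
    hlin2 (fderiv ℝ (fderiv ℝ φ) (u, X)) (-1) ((-(1:ℝ)/2) * X^3) (1,0),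
    hlin2 (fderiv ℝ (fderiv ℝ φ) (u, X)) (-1) ((-(1:ℝ)/2) * X^3) (0,1),
    hsym]
  have hfuX : f u X = φ (u, X) := rfl
  rw [hfuX] at hpde
  push_cast at hpde ⊢
  linear_combination (-X^8) * hpde
end
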